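/- arXiv:2411.00455 — 5 statements merged into one kernel-verified Lean document; each statement's English description precedes it below -/
import Mathlib

section
/- Let S be a real n×n matrix, F ∈ ℝ^n (regarded as a row vector), and let v₀ : [0,∞) → ℝ^n be a differentiable function satisfying v₀'(t) = S v₀(t) for all t ≥ 0 and bounded on [0,∞); set y₀(t) = F·v₀(t), so that the k-th derivative of y₀ satisfies y₀^{(k)}(t) = F·(S^k v₀(t)). Let v : [0,∞) → ℝ^n and A : [0,∞) → ℝ^{n×n} be bounded functions, and suppose there exist c > 0 and λ > 0 such that ‖v(t) − v₀(t)‖ ≤ c·e^{−λt} and ‖A(t) − S‖ ≤ c·e^{−λt} for all t ≥ 0. Then for every natural number k ≥ 0 there exists c' > 0 such that |F·(A(t)^k v(t)) − y₀^{(k)}(t)| ≤ c'·e^{−λt} for all t ≥ 0; in particular F·(A(t)^k v(t)) − y₀^{(k)}(t) → 0 exponentially as t → ∞. -/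
open scoped Matrix.Norms.L2Operator RealInnerProductSpace

/-! Differentiating along `v₀' = S v₀` gives `y₀⁽ᵏ⁾ = F·(Sᵏ v₀)`. Splitting
`Aᵏ v − Sᵏ v₀ = Aᵏ (v − v₀) + (Aᵏ − Sᵏ) v₀` and telescoping `Aᵏ − Sᵏ` one factor at a time,
both terms are bounded by a constant (depending on the bounds for `A`, `S`, `v₀`) times
`‖v − v₀‖` or `‖A − S‖`, hence by a constant times `e^{−λt}`. -/

namespace ContinuousLinearMap

variable {𝕜 E : Type*} [NontriviallyNormedField 𝕜] [NormedAddCommGroup E] [NormedSpace 𝕜 E]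

-- `norm_pow_le` needs `NormOneClass`, which fails when `E` is the zero space.
theorem norm_pow_le_of_le {T : E →L[𝕜] E} {N : ℝ} (hT : ‖T‖ ≤ N) (k : ℕ) : ‖T ^ k‖ ≤ N ^ k := by
  rcases k.eq_zero_or_pos with rfl | hk
  · simpa [one_def] using norm_id_le
  · exact (norm_pow_le' T hk).trans (pow_le_pow_left₀ (norm_nonneg T) hT k)

theorem norm_pow_sub_pow_le {T T₀ : E →L[𝕜] E} {N : ℝ} (hT : ‖T‖ ≤ N) (hT₀ : ‖T₀‖ ≤ N) :
    ∀ k : ℕ, ‖T ^ k - T₀ ^ k‖ ≤ k * N ^ (k - 1) * ‖T - T₀‖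
  | 0 => by simp
  | k + 1 => by
    have hN : 0 ≤ N := (norm_nonneg T).trans hT
    have ih := norm_pow_sub_pow_le hT hT₀ k
    have htelescope : T ^ (k + 1) - T₀ ^ (k + 1) = T ^ k * (T - T₀) + (T ^ k - T₀ ^ k) * T₀ := by
      simp only [pow_succ, mul_sub, sub_mul, sub_add_sub_cancel]
    have hpow : k * N ^ (k - 1) * N = k * N ^ k := by
      rcases k with _ | k
      · simp
      · simp [pow_succ, mul_assoc]
    calc ‖T ^ (k + 1) - T₀ ^ (k + 1)‖
        ≤ ‖T ^ k‖ * ‖T - T₀‖ + ‖T ^ k - T₀ ^ k‖ * ‖T₀‖ := by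
          rw [htelescope]
          exact (norm_add_le _ _).trans (add_le_add (norm_mul_le _ _) (norm_mul_le _ _))
      _ ≤ N ^ k * ‖T - T₀‖ + k * N ^ (k - 1) * ‖T - T₀‖ * N := by
          gcongr
          exact norm_pow_le_of_le hT k
      _ = (k + 1 : ℕ) * N ^ (k + 1 - 1) * ‖T - T₀‖ := by
          rw [mul_right_comm _ ‖T - T₀‖, hpow]
          push_cast
          ring

theorem norm_pow_apply_sub_pow_apply_le {T T₀ : E →L[𝕜] E} {N M ε : ℝ} (hT : ‖T‖ ≤ N)
    (hT₀ : ‖T₀‖ ≤ N) {x x₀ : E} (hx₀ : ‖x₀‖ ≤ M) (hx : ‖x - x₀‖ ≤ ε) (hTT₀ : ‖T - T₀‖ ≤ ε)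
    (k : ℕ) : ‖(T ^ k) x - (T₀ ^ k) x₀‖ ≤ (N ^ k + k * N ^ (k - 1) * M) * ε := by
  have hN : 0 ≤ N := (norm_nonneg T).trans hT
  have hM : 0 ≤ M := (norm_nonneg x₀).trans hx₀
  have hε : 0 ≤ ε := (norm_nonneg _).trans hx
  have hsplit : (T ^ k) x - (T₀ ^ k) x₀ = (T ^ k) (x - x₀) + (T ^ k - T₀ ^ k) x₀ := by
    simp only [map_sub, sub_apply, sub_add_sub_cancel]
  calc ‖(T ^ k) x - (T₀ ^ k) x₀‖
      ≤ ‖T ^ k‖ * ‖x - x₀‖ + ‖T ^ k - T₀ ^ k‖ * ‖x₀‖ := by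
        rw [hsplit]
        exact (norm_add_le _ _).trans (add_le_add (le_opNorm _ _) (le_opNorm _ _))
    _ ≤ N ^ k * ε + k * N ^ (k - 1) * ε * M := by
        have hpow_sub : ‖T ^ k - T₀ ^ k‖ ≤ k * N ^ (k - 1) * ε :=
          (norm_pow_sub_pow_le hT hT₀ k).trans (by gcongr)
        gcongr
        exact norm_pow_le_of_le hT k
    _ = (N ^ k + k * N ^ (k - 1) * M) * ε := by ring

end ContinuousLinearMap

theorem iteratedDeriv_clm_comp_of_hasDerivAt {𝕜 E G : Type*} [NontriviallyNormedField 𝕜]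
    [NormedAddCommGroup E] [NormedSpace 𝕜 E] [NormedAddCommGroup G] [NormedSpace 𝕜 G]
    {u : 𝕜 → E} {T : E →L[𝕜] E} (hu : ∀ t, HasDerivAt u (T (u t)) t) (L : E →L[𝕜] G) :
    ∀ k : ℕ, iteratedDeriv k (fun t => L (u t)) = fun t => L ((T ^ k) (u t))
  | 0 => by simp
  | k + 1 => by
    rw [iteratedDeriv_succ, iteratedDeriv_clm_comp_of_hasDerivAt hu L k]
    funext t
    simpa [pow_succ, Function.comp_def] using
      ((L.comp (T ^ k)).hasFDerivAt.comp_hasDerivAt t (hu t)).deriv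

theorem stmt_2_general {n : ℕ} (S : Matrix (Fin n) (Fin n) ℝ) (F : EuclideanSpace ℝ (Fin n))
    (v₀ : ℝ → EuclideanSpace ℝ (Fin n))
    (hv₀d : ∀ t, HasDerivAt v₀ (Matrix.toEuclideanCLM (𝕜 := ℝ) S (v₀ t)) t)
    (hv₀b : ∃ M, ∀ t ≥ (0 : ℝ), ‖v₀ t‖ ≤ M)
    (v : ℝ → EuclideanSpace ℝ (Fin n)) (A : ℝ → Matrix (Fin n) (Fin n) ℝ)
    (hAb : ∃ M, ∀ t ≥ (0 : ℝ), ‖A t‖ ≤ M)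
    (c lam : ℝ)
    (hvconv : ∀ t ≥ (0 : ℝ), ‖v t - v₀ t‖ ≤ c * Real.exp (-lam * t))
    (hAconv : ∀ t ≥ (0 : ℝ), ‖A t - S‖ ≤ c * Real.exp (-lam * t)) (k : ℕ) :
    ∃ c' > 0, ∀ t ≥ (0 : ℝ),
      |⟪F, Matrix.toEuclideanCLM (𝕜 := ℝ) (A t ^ k) (v t)⟫ -
          iteratedDeriv k (fun τ => ⟪F, v₀ τ⟫) t| ≤ c' * Real.exp (-lam * t) := by
  obtain ⟨M, hM⟩ := hv₀b
  obtain ⟨MA, hMA⟩ := hAb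
  set N := max MA ‖S‖
  set C := ‖F‖ * (N ^ k + k * N ^ (k - 1) * M) * c
  have hderiv := iteratedDeriv_clm_comp_of_hasDerivAt hv₀d (innerSL ℝ F) k
  simp only [innerSL_apply_apply] at hderiv
  refine ⟨max C 1, by positivity, fun t ht => ?_⟩
  set T := Matrix.toEuclideanCLM (𝕜 := ℝ) (A t)
  set T₀ := Matrix.toEuclideanCLM (𝕜 := ℝ) S
  have hTT₀ : ‖T - T₀‖ ≤ c * Real.exp (-lam * t) := by
    rw [← map_sub]
    exact hAconv t ht
  rw [hderiv, map_pow, ← inner_sub_right]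
  calc _ ≤ ‖F‖ * ‖(T ^ k) (v t) - (T₀ ^ k) (v₀ t)‖ :=
        abs_real_inner_le_norm _ _
    _ ≤ ‖F‖ * ((N ^ k + k * N ^ (k - 1) * M) * (c * Real.exp (-lam * t))) := by
        gcongr
        exact ContinuousLinearMap.norm_pow_apply_sub_pow_apply_le (le_max_of_le_left (hMA t ht))
          (le_max_right MA ‖S‖) (hM t ht) (hvconv t ht) hTT₀ k
    _ = C * Real.exp (-lam * t) := by ring
    _ ≤ max C 1 * Real.exp (-lam * t) := by gcongr; exact le_max_left C 1

/-- If `v₀' = S v₀` with `v₀` bounded on `[0,∞)`, `y₀ = F·v₀`, and the bounded signals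
`v(t)`, `A(t)` converge exponentially (rate `λ`) to `v₀(t)` and `S` respectively, then for
every `k` the quantity `F·(A(t)^k v(t)) − y₀^{(k)}(t)` converges to `0` exponentially
(rate `λ`). -/
theorem stmt_2 {n : ℕ} (S : Matrix (Fin n) (Fin n) ℝ) (F : EuclideanSpace ℝ (Fin n))
    (v₀ : ℝ → EuclideanSpace ℝ (Fin n))
    (hv₀d : ∀ t, HasDerivAt v₀ (Matrix.toEuclideanCLM (𝕜 := ℝ) S (v₀ t)) t)
    (hv₀b : ∃ M, ∀ t ≥ (0 : ℝ), ‖v₀ t‖ ≤ M)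
    (v : ℝ → EuclideanSpace ℝ (Fin n)) (A : ℝ → Matrix (Fin n) (Fin n) ℝ)
    (hvb : ∃ M, ∀ t ≥ (0 : ℝ), ‖v t‖ ≤ M) (hAb : ∃ M, ∀ t ≥ (0 : ℝ), ‖A t‖ ≤ M)
    (c lam : ℝ) (hc : 0 < c) (hlam : 0 < lam)
    (hvconv : ∀ t ≥ (0 : ℝ), ‖v t - v₀ t‖ ≤ c * Real.exp (-lam * t))
    (hAconv : ∀ t ≥ (0 : ℝ), ‖A t - S‖ ≤ c * Real.exp (-lam * t)) (k : ℕ) :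
    ∃ c' > 0, ∀ t ≥ (0 : ℝ),
      |⟪F, Matrix.toEuclideanCLM (𝕜 := ℝ) (A t ^ k) (v t)⟫ -
          iteratedDeriv k (fun τ => ⟪F, v₀ τ⟫) t| ≤ c' * Real.exp (-lam * t) :=
  stmt_2_general S F v₀ hv₀d hv₀b v A hAb c lam hvconv hAconv k
end

section
/- Let A : [0,∞) → ℝ^{n×n} be differentiable with ‖A(t)‖ ≤ M for all t ≥ 0 and ‖A'(t)‖ ≤ c·e^{−λt} for all t ≥ 0, for some constants M, c, λ > 0. Let v : [0,∞) → ℝ^n be differentiable with ‖v(t)‖ ≤ M for all t ≥ 0 and v'(t) = A(t)v(t) + w(t), where ‖w(t)‖ ≤ c·e^{−λt} for all t ≥ 0. Then for every natural number k ≥ 0 there exists c' > 0 such that ‖(d/dt)(A(t)^k v(t)) − A(t)^{k+1} v(t)‖ ≤ c'·e^{−λt} for all t ≥ 0. -/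
open scoped Matrix.Norms.L2Operator

/-!
Write `e_k = (B^k v)' - B^(k+1) v`. Since `v' = B v + w`, `e_0 = w`, and the product rule
applied to `B^(k+1) v = B (B^k v)` gives `e_(k+1) = B' (B^k v) + B e_k`. With `‖B‖, ‖v‖ ≤ M`
and `‖B'‖, ‖w‖ ≤ ε` this yields `‖e_k‖ ≤ (k + 1) M^k ε` pointwise, so the rate `ε = c e^{-λt}`
is inherited by every `e_k`.
-/

section

variable {𝕜 E : Type*} [NontriviallyNormedField 𝕜] [NormedAddCommGroup E] [NormedSpace 𝕜 E]

theorem ContinuousLinearMap.norm_pow_apply_le {B : E →L[𝕜] E} {M : ℝ} (hB : ‖B‖ ≤ M)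
    (k : ℕ) (x : E) : ‖(B ^ k) x‖ ≤ M ^ k * ‖x‖ := by
  induction k with
  | zero => simp
  | succ k ih =>
    have hM : 0 ≤ M := (norm_nonneg B).trans hB
    calc ‖(B ^ (k + 1)) x‖ = ‖B ((B ^ k) x)‖ := by rw [pow_succ']; rfl
      _ ≤ M * (M ^ k * ‖x‖) := (B.le_of_opNorm_le hB _).trans (by gcongr)
      _ = M ^ (k + 1) * ‖x‖ := by ring

theorem exists_hasDerivAt_pow_apply_sub_pow_succ_apply_le {B : 𝕜 → E →L[𝕜] E}
    {v : 𝕜 → E} {B' : E →L[𝕜] E} {w : E} {t : 𝕜} {M ε : ℝ}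
    (hB : HasDerivAt B B' t) (hv : HasDerivAt v (B t (v t) + w) t)
    (hBM : ‖B t‖ ≤ M) (hvM : ‖v t‖ ≤ M) (hB' : ‖B'‖ ≤ ε) (hw : ‖w‖ ≤ ε) (k : ℕ) :
    ∃ d, HasDerivAt (fun τ => (B τ ^ k) (v τ)) d t ∧
      ‖d - (B t ^ (k + 1)) (v t)‖ ≤ (k + 1) * M ^ k * ε := by
  induction k with
  | zero => exact ⟨B t (v t) + w, by simpa using hv, by simpa using hw⟩
  | succ k ih =>
    obtain ⟨d, hd, hdε⟩ := ih
    have hM : 0 ≤ M := (norm_nonneg _).trans hBM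
    have hε : 0 ≤ ε := (norm_nonneg _).trans hB'
    have hpow : ∀ (j : ℕ) (τ : 𝕜), (B τ ^ (j + 1)) (v τ) = B τ ((B τ ^ j) (v τ)) := by
      intro j τ; rw [pow_succ']; rfl
    refine ⟨B' ((B t ^ k) (v t)) + B t d, ?_, ?_⟩
    · simp only [hpow]
      exact hB.clm_apply hd
    · have hsplit : B' ((B t ^ k) (v t)) + B t d - (B t ^ (k + 1 + 1)) (v t)
          = B' ((B t ^ k) (v t)) + B t (d - (B t ^ (k + 1)) (v t)) := by
        rw [hpow, map_sub]; abel
      have hBk : ‖(B t ^ k) (v t)‖ ≤ M ^ k * M :=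
        (ContinuousLinearMap.norm_pow_apply_le hBM k _).trans (by gcongr)
      calc ‖B' ((B t ^ k) (v t)) + B t d - (B t ^ (k + 1 + 1)) (v t)‖
          ≤ ‖B'‖ * ‖(B t ^ k) (v t)‖ + ‖B t‖ * ‖d - (B t ^ (k + 1)) (v t)‖ := by
            rw [hsplit]
            exact (norm_add_le _ _).trans (add_le_add (B'.le_opNorm _) ((B t).le_opNorm _))
        _ ≤ ε * (M ^ k * M) + M * ((k + 1) * M ^ k * ε) := by gcongr
        _ = ((k + 1 : ℕ) + 1) * M ^ (k + 1) * ε := by push_cast; ring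

end

theorem Matrix.hasDerivAt_toEuclideanCLM {n : Type*} [Fintype n] [DecidableEq n]
    {A : ℝ → Matrix n n ℝ} {A' : Matrix n n ℝ} {t : ℝ} (hA : HasDerivAt A A' t) :
    HasDerivAt (fun τ => Matrix.toEuclideanCLM (𝕜 := ℝ) (A τ))
      (Matrix.toEuclideanCLM (𝕜 := ℝ) A') t :=
  (Matrix.toEuclideanCLM (n := n) (𝕜 := ℝ)).toAlgEquiv.toLinearMap.toContinuousLinearMap
    |>.hasFDerivAt.comp_hasDerivAt t hA

theorem stmt_3_general {n : ℕ} (A : ℝ → Matrix (Fin n) (Fin n) ℝ)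
    (A' : ℝ → Matrix (Fin n) (Fin n) ℝ) (hA : ∀ t, HasDerivAt A (A' t) t)
    (v : ℝ → EuclideanSpace ℝ (Fin n)) (w : ℝ → EuclideanSpace ℝ (Fin n))
    (hv : ∀ t, HasDerivAt v (Matrix.toEuclideanCLM (𝕜 := ℝ) (A t) (v t) + w t) t)
    (M c lam : ℝ) (hM : 0 < M) (hc : 0 < c)
    (hAbd : ∀ t ≥ (0 : ℝ), ‖A t‖ ≤ M) (hvbd : ∀ t ≥ (0 : ℝ), ‖v t‖ ≤ M)
    (hA' : ∀ t ≥ (0 : ℝ), ‖A' t‖ ≤ c * Real.exp (-lam * t))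
    (hw : ∀ t ≥ (0 : ℝ), ‖w t‖ ≤ c * Real.exp (-lam * t)) (k : ℕ) :
    ∃ c' > 0, ∀ t ≥ (0 : ℝ),
      ‖deriv (fun τ => Matrix.toEuclideanCLM (𝕜 := ℝ) (A τ ^ k) (v τ)) t -
          Matrix.toEuclideanCLM (𝕜 := ℝ) (A t ^ (k + 1)) (v t)‖ ≤ c' * Real.exp (-lam * t) := by
  refine ⟨(k + 1) * M ^ k * c, by positivity, fun t ht => ?_⟩
  obtain ⟨d, hd, hdε⟩ := exists_hasDerivAt_pow_apply_sub_pow_succ_apply_le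
    (Matrix.hasDerivAt_toEuclideanCLM (hA t)) (hv t) (hAbd t ht) (hvbd t ht) (hA' t ht) (hw t ht) k
  simp only [map_pow] at hd ⊢
  rw [hd.deriv, mul_assoc]
  exact hdε

/-- If `A(t)` is differentiable and bounded with exponentially decaying derivative, and
`v' = A v + w` with `v` bounded and `w` exponentially decaying, then for every `k` the
derivative of `A(t)^k v(t)` differs from `A(t)^{k+1} v(t)` by an exponentially decaying
error. -/
theorem stmt_3 {n : ℕ} (A : ℝ → Matrix (Fin n) (Fin n) ℝ)
    (A' : ℝ → Matrix (Fin n) (Fin n) ℝ) (hA : ∀ t, HasDerivAt A (A' t) t)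
    (v : ℝ → EuclideanSpace ℝ (Fin n)) (w : ℝ → EuclideanSpace ℝ (Fin n))
    (hv : ∀ t, HasDerivAt v (Matrix.toEuclideanCLM (𝕜 := ℝ) (A t) (v t) + w t) t)
    (M c lam : ℝ) (hM : 0 < M) (hc : 0 < c) (hlam : 0 < lam)
    (hAbd : ∀ t ≥ (0 : ℝ), ‖A t‖ ≤ M) (hvbd : ∀ t ≥ (0 : ℝ), ‖v t‖ ≤ M)
    (hA' : ∀ t ≥ (0 : ℝ), ‖A' t‖ ≤ c * Real.exp (-lam * t))
    (hw : ∀ t ≥ (0 : ℝ), ‖w t‖ ≤ c * Real.exp (-lam * t)) (k : ℕ) :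
    ∃ c' > 0, ∀ t ≥ (0 : ℝ),
      ‖deriv (fun τ => Matrix.toEuclideanCLM (𝕜 := ℝ) (A τ ^ k) (v τ)) t -
          Matrix.toEuclideanCLM (𝕜 := ℝ) (A t ^ (k + 1)) (v t)‖ ≤ c' * Real.exp (-lam * t) :=
  stmt_3_general A A' hA v w hv M c lam hM hc hAbd hvbd hA' hw k
end

section
/- (Generalized Barbalat's lemma) Let W : [0,∞) → ℝ be continuously differentiable and suppose: (1) lim_{t→∞} W(t) exists and is finite; (2) there exists a strictly increasing sequence 0 = t₀ < t₁ < t₂ < ⋯ with t_j → ∞ and t_{j+1} − t_j ≥ τ for some τ > 0 and all j, such that W is twice differentiable on each open interval (t_j, t_{j+1}); and (3) there exists a finite constant K > 0 with |W''(t)| ≤ K for all t in the union of the intervals (t_j, t_{j+1}). Then W'(t) → 0 as t → ∞. -/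
open Filter

/-- Mean value inequality: `deriv W` is `K`-Lipschitz on `[a,b]` when it is
differentiable on `(a,b)` with second derivative bounded by `K`. -/
lemma lip_seg (W : ℝ → ℝ) (hW : ContDiff ℝ 1 W) (a b K : ℝ)
    (hdiff : ∀ x ∈ Set.Ioo a b, DifferentiableAt ℝ (deriv W) x)
    (hbd : ∀ x ∈ Set.Ioo a b, |deriv (deriv W) x| ≤ K) :
    ∀ x ∈ Set.Icc a b, ∀ y ∈ Set.Icc a b,
      |deriv W y - deriv W x| ≤ K * |y - x| := by
  have key : ∀ x ∈ Set.Icc a b, ∀ y ∈ Set.Icc a b, x < y →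
      |deriv W y - deriv W x| ≤ K * |y - x| := by
    intro x hx y hy hxy
    have hcont : ContinuousOn (deriv W) (Set.Icc x y) :=
      (hW.continuous_deriv le_rfl).continuousOn
    have hder : ∀ z ∈ Set.Ioo x y, HasDerivAt (deriv W) (deriv (deriv W) z) z := by
      intro z hz
      exact (hdiff z ⟨lt_of_le_of_lt hx.1 hz.1, lt_of_lt_of_le hz.2 hy.2⟩).hasDerivAt
    obtain ⟨c, hc, hceq⟩ := exists_hasDerivAt_eq_slope (deriv W) (deriv (deriv W))
      hxy hcont hder
    have hcK : |deriv (deriv W) c| ≤ K :=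
      hbd c ⟨lt_of_le_of_lt hx.1 hc.1, lt_of_lt_of_le hc.2 hy.2⟩
    rw [hceq] at hcK
    have h1 : |deriv W y - deriv W x| = |(deriv W y - deriv W x) / (y - x)| * |y - x| := by
      rw [← abs_mul, div_mul_cancel₀]
      linarith
    rw [h1]
    have : 0 ≤ |y - x| := abs_nonneg _
    exact mul_le_mul_of_nonneg_right hcK this
  intro x hx y hy
  rcases lt_trichotomy x y with h | h | h
  · exact key x hx y hy h
  · simp [h]
  · have := key y hy x hx h
    rwa [abs_sub_comm (deriv W x), abs_sub_comm x] at this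

/-- Generalized Barbalat's lemma: if `W` is continuously differentiable, `lim_{t→∞} W(t)`
exists and is finite, and there is a strictly increasing sequence of times `t_0 = 0 < t_1 < ⋯`
with dwell time `τ > 0` and `t_j → ∞` such that `W` is twice differentiable on each open
interval `(t_j, t_{j+1})` with `|W''| ≤ K` there, then `W'(t) → 0` as `t → ∞`. -/
theorem stmt_8 (W : ℝ → ℝ) (hW : ContDiff ℝ 1 W)
    (L : ℝ) (hlim : Tendsto W atTop (nhds L))
    (tseq : ℕ → ℝ) (ht0 : tseq 0 = 0) (hmono : StrictMono tseq)
    (τ : ℝ) (hτ : 0 < τ) (hgap : ∀ j, τ ≤ tseq (j + 1) - tseq j)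
    (htop : Tendsto tseq atTop atTop)
    (hdiff : ∀ j, ∀ x ∈ Set.Ioo (tseq j) (tseq (j + 1)), DifferentiableAt ℝ (deriv W) x)
    (K : ℝ) (hK : 0 < K)
    (hbd : ∀ j, ∀ x ∈ Set.Ioo (tseq j) (tseq (j + 1)), |deriv (deriv W) x| ≤ K) :
    Tendsto (deriv W) atTop (nhds 0) := by
  by_contra hcon
  rw [Metric.tendsto_atTop] at hcon
  push_neg at hcon
  obtain ⟨ε, hε, hfreq⟩ := hcon
  set δ : ℝ := min (ε / (2 * K)) (τ / 2) with hδdef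
  have hδpos : 0 < δ := lt_min (by positivity) (by positivity)
  have hδτ : 2 * δ ≤ τ := by
    have := min_le_right (ε / (2 * K)) (τ / 2); linarith
  have hKδ : K * δ ≤ ε / 2 := by
    have h1 : δ ≤ ε / (2 * K) := min_le_left _ _
    calc K * δ ≤ K * (ε / (2 * K)) := by nlinarith
    _ = ε / 2 := by field_simp
  rw [Metric.tendsto_atTop] at hlim
  obtain ⟨T, hT⟩ := hlim (ε * δ / 4) (by positivity)
  obtain ⟨s, hs, hsW⟩ := hfreq (max T 0 + δ)
  rw [Real.dist_eq, sub_zero] at hsW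
  have hspos : 0 < s := lt_of_lt_of_le (by positivity : (0:ℝ) < max T 0 + δ) hs
  -- find the switching interval containing s
  have hex : ∃ n, s < tseq n := (htop.eventually_gt_atTop s).exists
  have hj1 : s < tseq (Nat.find hex) := Nat.find_spec hex
  have hjpos : Nat.find hex ≠ 0 := by
    intro h
    rw [h, ht0] at hj1
    linarith
  obtain ⟨i, hi⟩ : ∃ i, Nat.find hex = i + 1 := ⟨Nat.find hex - 1, (Nat.succ_pred_eq_of_pos (Nat.pos_of_ne_zero hjpos)).symm⟩
  have his : tseq i ≤ s := by
    by_contra h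
    push_neg at h
    exact Nat.find_min hex (by omega : i < Nat.find hex) h
  rw [hi] at hj1
  -- choose the interval [a, a+δ] ⊆ [tseq i, tseq (i+1)] containing s
  obtain ⟨a, ha1, ha2, ha3, ha4⟩ :
      ∃ a, tseq i ≤ a ∧ a + δ ≤ tseq (i + 1) ∧ s ∈ Set.Icc a (a + δ) ∧ max T 0 ≤ a := by
    by_cases hc : s + δ ≤ tseq (i + 1)
    · exact ⟨s, his, hc, ⟨le_refl s, by linarith⟩, by linarith⟩
    · push_neg at hc
      refine ⟨s - δ, ?_, by linarith, ⟨by linarith, by linarith⟩, by linarith⟩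
      have := hgap i
      linarith
  -- deriv W is bounded below by ε/2 on [a, a+δ]
  have hlip := lip_seg W hW (tseq i) (tseq (i + 1)) K (hdiff i) (hbd i)
  have hsub : Set.Icc a (a + δ) ⊆ Set.Icc (tseq i) (tseq (i + 1)) := by
    intro x hx
    exact ⟨le_trans ha1 hx.1, le_trans hx.2 ha2⟩
  have hlow : ∀ x ∈ Set.Icc a (a + δ), ε / 2 ≤ |deriv W x| := by
    intro x hx
    have h1 : |deriv W x - deriv W s| ≤ K * |x - s| :=
      hlip s (hsub ha3) x (hsub hx)
    have h2 : |x - s| ≤ δ := by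
      rw [abs_le]
      constructor <;> [linarith [hx.1, ha3.2]; linarith [hx.2, ha3.1]]
    have h3 : |deriv W x - deriv W s| ≤ ε / 2 := by
      calc |deriv W x - deriv W s| ≤ K * |x - s| := h1
      _ ≤ K * δ := by nlinarith [abs_nonneg (x - s)]
      _ ≤ ε / 2 := hKδ
    have := abs_sub_abs_le_abs_sub (deriv W s) (deriv W x)
    rw [abs_sub_comm] at h3
    linarith
  -- mean value theorem for W on [a, a+δ]
  have hWd : ∀ z ∈ Set.Ioo a (a + δ), HasDerivAt W (deriv W z) z := fun z _ =>
    ((hW.differentiable (by norm_num)) z).hasDerivAt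
  obtain ⟨c, hc, hceq⟩ := exists_hasDerivAt_eq_slope W (deriv W)
    (by linarith : a < a + δ) hW.continuous.continuousOn hWd
  have hclow : ε / 2 ≤ |deriv W c| := hlow c ⟨le_of_lt hc.1, le_of_lt hc.2⟩
  rw [hceq] at hclow
  have hδeq : a + δ - a = δ := by ring
  rw [hδeq, abs_div, abs_of_pos hδpos, le_div_iff₀ hδpos] at hclow
  -- but W is Cauchy at infinity
  have hTa : dist (W a) L < ε * δ / 4 := hT a (le_trans (le_max_left T 0) ha4)
  have hTb : dist (W (a + δ)) L < ε * δ / 4 :=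
    hT (a + δ) (by linarith [le_trans (le_max_left T 0) ha4])
  rw [Real.dist_eq] at hTa hTb
  have : |W (a + δ) - W a| < ε * δ / 2 := by
    calc |W (a + δ) - W a| = |(W (a + δ) - L) - (W a - L)| := by ring_nf
    _ ≤ |W (a + δ) - L| + |W a - L| := abs_sub _ _
    _ < ε * δ / 2 := by linarith
  linarith
end

section
/- For i = 1, ..., N, let m_i be a positive integer, f_i : [0,∞) → ℝ^{m_i} a continuous function, k_i > 0 a constant, and Λ_i a symmetric positive definite m_i×m_i real matrix. Suppose s_i : [0,∞) → ℝ and θ̃_i : [0,∞) → ℝ^{m_i} are differentiable and satisfy for all t ≥ 0: s_i'(t) = f_i(t)ᵀθ̃_i(t) − k_i s_i(t) and θ̃_i'(t) = −Λ_i^{−1} f_i(t) s_i(t). Then: (a) the function V(t) = (1/2)Σ_{i=1}^N (s_i(t)² + θ̃_i(t)ᵀ Λ_i θ̃_i(t)) satisfies V'(t) = −Σ_{i=1}^N k_i s_i(t)² ≤ 0, so V has a finite limit as t → ∞ and all s_i, θ̃_i are bounded on [0,∞); and (b) if moreover each f_i is bounded on [0,∞), then s_i(t) → 0 as t → ∞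 for each i. -/
open Matrix Filter

lemma quadDeriv {n : ℕ} (A : Matrix (Fin n) (Fin n) ℝ) (θ : ℝ → Fin n → ℝ)
    (v : Fin n → ℝ) (t : ℝ) (h : HasDerivAt θ v t) :
    HasDerivAt (fun τ => θ τ ⬝ᵥ (A *ᵥ θ τ)) (v ⬝ᵥ (A *ᵥ θ t) + θ t ⬝ᵥ (A *ᵥ v)) t := by
  have hcomp : ∀ j, HasDerivAt (fun τ => θ τ j) (v j) t := fun j => hasDerivAt_pi.1 h j
  have h1 : ∀ j, HasDerivAt (fun τ => ∑ k, A j k * θ τ k) (∑ k, A j k * v k) t := fun j =>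
    HasDerivAt.fun_sum fun kk _ => (hcomp kk).const_mul _
  have h2 : HasDerivAt (fun τ => ∑ j, θ τ j * ∑ kk, A j kk * θ τ kk)
      (∑ j, (v j * (∑ kk, A j kk * θ t kk) + θ t j * ∑ kk, A j kk * v kk)) t :=
    HasDerivAt.fun_sum fun j _ => (hcomp j).mul (h1 j)
  convert h2 using 2 <;>
    simp [dotProduct, Matrix.mulVec, Finset.sum_add_distrib]

lemma symmSwap {n : ℕ} {A : Matrix (Fin n) (Fin n) ℝ} (hA : A.IsSymm)
    (x y : Fin n → ℝ) : x ⬝ᵥ (A *ᵥ y) = y ⬝ᵥ (A *ᵥ x) := by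
  rw [dotProduct_mulVec, ← mulVec_transpose, hA.eq, dotProduct_comm]

lemma posdef_lower {n : ℕ} (hn : 0 < n) {A : Matrix (Fin n) (Fin n) ℝ} (hA : A.PosDef) :
    ∃ c > 0, ∀ x : Fin n → ℝ, c * ‖x‖ ^ 2 ≤ x ⬝ᵥ (A *ᵥ x) := by
  haveI : Nonempty (Fin n) := ⟨⟨0, hn⟩⟩
  have hcont : Continuous (fun x : Fin n → ℝ => x ⬝ᵥ (A *ᵥ x)) := by
    have : (fun x : Fin n → ℝ => x ⬝ᵥ (A *ᵥ x)) =
        fun x => ∑ j, x j * ∑ kk, A j kk * x kk := by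
      funext x; simp [dotProduct, Matrix.mulVec]
    rw [this]
    exact continuous_finset_sum _ fun j _ => (continuous_apply j).mul
      (continuous_finset_sum _ fun kk _ => continuous_const.mul (continuous_apply kk))
  have hsph : (Metric.sphere (0 : Fin n → ℝ) 1).Nonempty := by
    refine ⟨fun _ => 1, ?_⟩
    simp [Metric.mem_sphere, dist_eq_norm]
  obtain ⟨x0, hx0mem, hx0min⟩ := (isCompact_sphere (0 : Fin n → ℝ) 1).exists_isMinOn hsph
    hcont.continuousOn
  have hx0norm : ‖x0‖ = 1 := by simpa [dist_eq_norm] using hx0mem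
  have hx0ne : x0 ≠ 0 := by intro h; rw [h] at hx0norm; simp at hx0norm
  set c := x0 ⬝ᵥ (A *ᵥ x0) with hc
  have hcpos : 0 < c := by simpa using hA.dotProduct_mulVec_pos hx0ne
  refine ⟨c, hcpos, fun x => ?_⟩
  rcases eq_or_ne x 0 with rfl | hx
  · simp
  · have hxn : (0:ℝ) < ‖x‖ := norm_pos_iff.2 hx
    set y := ‖x‖⁻¹ • x with hy
    have hymem : y ∈ Metric.sphere (0 : Fin n → ℝ) 1 := by
      simp [hy, dist_eq_norm, norm_smul, abs_of_pos (inv_pos.2 hxn), inv_mul_cancel₀ hxn.ne']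
    have hcy : c ≤ y ⬝ᵥ (A *ᵥ y) := hx0min hymem
    have hval : y ⬝ᵥ (A *ᵥ y) = ‖x‖⁻¹ * (‖x‖⁻¹ * (x ⬝ᵥ (A *ᵥ x))) := by
      simp [hy, Matrix.mulVec_smul, smul_dotProduct, dotProduct_smul, smul_eq_mul, mul_assoc]
    rw [hval] at hcy
    have := mul_le_mul_of_nonneg_left hcy (le_of_lt (mul_pos hxn hxn))
    calc c * ‖x‖ ^ 2 = (‖x‖ * ‖x‖) * c := by ring
    _ ≤ (‖x‖ * ‖x‖) * (‖x‖⁻¹ * (‖x‖⁻¹ * (x ⬝ᵥ (A *ᵥ x)))) := this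
    _ = x ⬝ᵥ (A *ᵥ x) := by field_simp

set_option maxHeartbeats 2000000

/-- The Lyapunov/Barbalat core of Theorem 1: along the adaptive error dynamics
`s_i' = f_iᵀθ̃_i − k_i s_i`, `θ̃_i' = −Λ_i⁻¹ f_i s_i`, the Lyapunov function
`V = (1/2) Σ_i (s_i² + θ̃_iᵀ Λ_i θ̃_i)` satisfies `V' = −Σ_i k_i s_i² ≤ 0`, hence `V`
has a finite limit and all `s_i`, `θ̃_i` are bounded on `[0,∞)`; moreover if each `f_i`
is bounded on `[0,∞)`, then `s_i(t) → 0` as `t → ∞`. -/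
theorem stmt_10 (N : ℕ) (m : Fin N → ℕ) (hm : ∀ i, 0 < m i)
    (f : (i : Fin N) → ℝ → (Fin (m i) → ℝ)) (hf : ∀ i, Continuous (f i))
    (k : Fin N → ℝ) (hk : ∀ i, 0 < k i)
    (Λ : (i : Fin N) → Matrix (Fin (m i)) (Fin (m i)) ℝ)
    (hΛ : ∀ i, (Λ i).PosDef ∧ (Λ i).IsSymm)
    (s : Fin N → ℝ → ℝ) (θ : (i : Fin N) → ℝ → (Fin (m i) → ℝ))
    (hs : ∀ i t, HasDerivAt (s i) (f i t ⬝ᵥ θ i t - k i * s i t) t)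
    (hθ : ∀ i t, HasDerivAt (θ i) ((-(s i t)) • ((Λ i)⁻¹ *ᵥ f i t)) t) :
    (∀ t, HasDerivAt (fun τ => (1 / 2 : ℝ) * ∑ i, (s i τ ^ 2 + θ i τ ⬝ᵥ (Λ i *ᵥ θ i τ)))
        (-∑ i, k i * s i t ^ 2) t) ∧
    (∃ L, Tendsto (fun τ => (1 / 2 : ℝ) * ∑ i, (s i τ ^ 2 + θ i τ ⬝ᵥ (Λ i *ᵥ θ i τ)))
        atTop (nhds L)) ∧
    (∀ i, ∃ M, ∀ t ≥ (0 : ℝ), |s i t| ≤ M ∧ ‖θ i t‖ ≤ M) ∧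
    ((∀ i, ∃ M, ∀ t ≥ (0 : ℝ), ‖f i t‖ ≤ M) → ∀ i, Tendsto (s i) atTop (nhds 0)) := by
  set V : ℝ → ℝ := fun τ => (1 / 2 : ℝ) * ∑ i, (s i τ ^ 2 + θ i τ ⬝ᵥ (Λ i *ᵥ θ i τ)) with hV
  -- quadratic terms are nonnegative
  have hquad_nonneg : ∀ i τ, 0 ≤ θ i τ ⬝ᵥ (Λ i *ᵥ θ i τ) := fun i τ => by
    simpa using (hΛ i).1.posSemidef.dotProduct_mulVec_nonneg (θ i τ)
  have hterm_nonneg : ∀ i τ, 0 ≤ s i τ ^ 2 + θ i τ ⬝ᵥ (Λ i *ᵥ θ i τ) := fun i τ =>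
    add_nonneg (sq_nonneg _) (hquad_nonneg i τ)
  have hVnonneg : ∀ τ, 0 ≤ V τ := fun τ =>
    mul_nonneg (by norm_num) (Finset.sum_nonneg fun i _ => hterm_nonneg i τ)
  -- part 1: derivative
  have hV' : ∀ t, HasDerivAt V (-∑ i, k i * s i t ^ 2) t := by
    intro t
    have hterm : ∀ i, HasDerivAt (fun τ => s i τ ^ 2 + θ i τ ⬝ᵥ (Λ i *ᵥ θ i τ))
        (-(2 * (k i * s i t ^ 2))) t := by
      intro i
      have h1 : HasDerivAt (fun τ => s i τ ^ 2)
          (2 * s i t * (f i t ⬝ᵥ θ i t - k i * s i t)) t := by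
        simpa [mul_comm] using (hs i t).fun_pow 2
      have h2 := quadDeriv (Λ i) (θ i) _ t (hθ i t)
      have hΛinv : Λ i *ᵥ ((Λ i)⁻¹ *ᵥ f i t) = f i t := by
        rw [Matrix.mulVec_mulVec,
          Matrix.mul_nonsing_inv _ (isUnit_iff_ne_zero.2 (hΛ i).1.det_pos.ne'),
          Matrix.one_mulVec]
      have hswap : ((-(s i t)) • ((Λ i)⁻¹ *ᵥ f i t)) ⬝ᵥ (Λ i *ᵥ θ i t)
          = θ i t ⬝ᵥ (Λ i *ᵥ ((-(s i t)) • ((Λ i)⁻¹ *ᵥ f i t))) := symmSwap (hΛ i).2 _ _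
      have hval : ((-(s i t)) • ((Λ i)⁻¹ *ᵥ f i t)) ⬝ᵥ (Λ i *ᵥ θ i t)
          + θ i t ⬝ᵥ (Λ i *ᵥ ((-(s i t)) • ((Λ i)⁻¹ *ᵥ f i t)))
          = -(2 * (s i t * (f i t ⬝ᵥ θ i t))) := by
        rw [hswap, Matrix.mulVec_smul, hΛinv, dotProduct_smul, dotProduct_comm]
        simp only [smul_eq_mul]
        ring
      have := h1.add h2
      rw [hval] at this
      refine this.congr_deriv ?_
      ring
    have hsum : HasDerivAt (fun τ => ∑ i, (s i τ ^ 2 + θ i τ ⬝ᵥ (Λ i *ᵥ θ i τ)))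
        (∑ i, -(2 * (k i * s i t ^ 2))) t := HasDerivAt.fun_sum fun i _ => hterm i
    have := hsum.const_mul (1 / 2 : ℝ)
    refine this.congr_deriv ?_
    rw [Finset.mul_sum]
    rw [← Finset.sum_neg_distrib]
    exact Finset.sum_congr rfl fun i _ => by ring
  have hsum_nonneg : ∀ t, 0 ≤ ∑ i, k i * s i t ^ 2 := fun t =>
    Finset.sum_nonneg fun i _ => mul_nonneg (hk i).le (sq_nonneg _)
  have hanti : Antitone V :=
    antitone_of_hasDerivAt_nonpos (f' := fun t => -∑ i, k i * s i t ^ 2) hV'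
      (fun t => neg_nonpos.2 (hsum_nonneg t))
  have hbdd : BddBelow (Set.range V) := ⟨0, fun x ⟨τ, hτ⟩ => hτ ▸ hVnonneg τ⟩
  have hL : Tendsto V atTop (nhds (⨅ τ, V τ)) := tendsto_atTop_ciInf hanti hbdd
  set L := ⨅ τ, V τ with hLdef
  have hLle : ∀ τ, L ≤ V τ := fun τ => ciInf_le hbdd τ
  -- single term bounded by 2V
  have hsingle : ∀ i τ, s i τ ^ 2 + θ i τ ⬝ᵥ (Λ i *ᵥ θ i τ) ≤ 2 * V τ := by
    intro i τ
    have h := Finset.single_le_sum (f := fun j => s j τ ^ 2 + θ j τ ⬝ᵥ (Λ j *ᵥ θ j τ))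
      (fun j _ => hterm_nonneg j τ) (Finset.mem_univ i)
    calc s i τ ^ 2 + θ i τ ⬝ᵥ (Λ i *ᵥ θ i τ)
        ≤ ∑ j, (s j τ ^ 2 + θ j τ ⬝ᵥ (Λ j *ᵥ θ j τ)) := h
      _ = 2 * V τ := by rw [hV]; ring
  -- part 3: boundedness
  have hbound : ∀ i, ∃ M, ∀ t ≥ (0 : ℝ), |s i t| ≤ M ∧ ‖θ i t‖ ≤ M := by
    intro i
    obtain ⟨c, hc, hcle⟩ := posdef_lower (hm i) (hΛ i).1
    set c' := min c 1 with hc'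
    have hc'pos : 0 < c' := lt_min hc one_pos
    have hc'le1 : c' ≤ 1 := min_le_right _ _
    refine ⟨Real.sqrt (2 * V 0 / c'), fun t ht => ?_⟩
    have hVt : V t ≤ V 0 := hanti ht
    have h2V0 : 0 ≤ 2 * V 0 := by linarith [hVnonneg 0]
    constructor
    · rw [← Real.sqrt_sq_eq_abs]
      apply Real.sqrt_le_sqrt
      rw [le_div_iff₀ hc'pos]
      have h1 : s i t ^ 2 ≤ 2 * V t := by
        have := hquad_nonneg i t; linarith [hsingle i t]
      nlinarith [sq_nonneg (s i t)]
    · have h1 : c' * ‖θ i t‖ ^ 2 ≤ 2 * V 0 := by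
        have h2 := hcle (θ i t)
        have h3 : θ i t ⬝ᵥ (Λ i *ᵥ θ i t) ≤ 2 * V t := by
          have := sq_nonneg (s i t); linarith [hsingle i t]
        have h4 : c' * ‖θ i t‖ ^ 2 ≤ c * ‖θ i t‖ ^ 2 :=
          mul_le_mul_of_nonneg_right (min_le_left _ _) (sq_nonneg _)
        linarith
      rw [show ‖θ i t‖ = |‖θ i t‖| from (abs_of_nonneg (norm_nonneg _)).symm,
        ← Real.sqrt_sq_eq_abs]
      apply Real.sqrt_le_sqrt
      rw [le_div_iff₀ hc'pos]
      linarith [h1]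
  refine ⟨hV', ⟨L, hL⟩, hbound, ?_⟩
  -- part 4: Barbalat
  intro hfb i
  obtain ⟨Mf, hMf⟩ := hfb i
  obtain ⟨Ms, hMs⟩ := hbound i
  have hMfnn : 0 ≤ Mf := le_trans (norm_nonneg _) (hMf 0 le_rfl)
  have hMsnn : 0 ≤ Ms := le_trans (abs_nonneg _) (hMs 0 le_rfl).1
  set C := (m i : ℝ) * Mf * Ms + k i * Ms + 1 with hC
  have hCpos : 0 < C := by
    have h1 : 0 ≤ (m i : ℝ) * Mf * Ms := by positivity
    nlinarith [mul_nonneg (hk i).le hMsnn]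
  -- derivative bound
  have hderiv_bound : ∀ t ≥ (0:ℝ), |f i t ⬝ᵥ θ i t - k i * s i t| ≤ C := by
    intro t ht
    have hdot : |f i t ⬝ᵥ θ i t| ≤ (m i : ℝ) * Mf * Ms := by
      calc |f i t ⬝ᵥ θ i t| ≤ ∑ j, |f i t j * θ i t j| :=
            Finset.abs_sum_le_sum_abs _ _
        _ ≤ ∑ _j : Fin (m i), Mf * Ms := by
            apply Finset.sum_le_sum
            intro j _
            rw [abs_mul]
            have hb1 : |f i t j| ≤ ‖f i t‖ := by simpa using norm_le_pi_norm (f i t) j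
            have hb2 : |θ i t j| ≤ ‖θ i t‖ := by simpa using norm_le_pi_norm (θ i t) j
            exact mul_le_mul (le_trans hb1 (hMf t ht))
              (le_trans hb2 (hMs t ht).2) (abs_nonneg _) hMfnn
        _ = (m i : ℝ) * Mf * Ms := by simp [mul_assoc]
    calc |f i t ⬝ᵥ θ i t - k i * s i t| ≤ |f i t ⬝ᵥ θ i t| + |k i * s i t| := abs_sub _ _
      _ ≤ (m i : ℝ) * Mf * Ms + k i * Ms := by
          rw [abs_mul, abs_of_pos (hk i)]
          have := mul_le_mul_of_nonneg_left (hMs t ht).1 (hk i).le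
          linarith
      _ ≤ C := by rw [hC]; linarith
  -- Lipschitz
  have hlip : ∀ a ∈ Set.Ici (0:ℝ), ∀ b ∈ Set.Ici (0:ℝ), |s i a - s i b| ≤ C * |a - b| := by
    intro a ha b hb
    have := (convex_Ici (0:ℝ)).norm_image_sub_le_of_norm_hasDerivWithin_le
      (f' := fun t => f i t ⬝ᵥ θ i t - k i * s i t)
      (fun x _ => (hs i x).hasDerivWithinAt)
      (fun x hx => hderiv_bound x hx) hb ha
    simpa [Real.norm_eq_abs, Real.dist_eq] using this
  by_contra hnot
  rw [Metric.tendsto_atTop] at hnot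
  push_neg at hnot
  obtain ⟨ε, hε, hfreq⟩ := hnot
  set δ := ε / (2 * C) with hδ
  have hδpos : 0 < δ := by positivity
  set c₀ := k i * (ε / 2) ^ 2 with hc₀
  have hc₀pos : 0 < c₀ := mul_pos (hk i) (by positivity)
  -- eventually V < L + c₀ δ
  have hev : ∀ᶠ τ in atTop, V τ < L + c₀ * δ := by
    have hlt : L < L + c₀ * δ := by nlinarith
    exact hL.eventually (gt_mem_nhds hlt)
  rw [eventually_atTop] at hev
  obtain ⟨T0, hT0⟩ := hev
  obtain ⟨t, ht, hst⟩ := hfreq (max T0 0)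
  have ht0 : (0:ℝ) ≤ t := le_trans (le_max_right _ _) ht
  have htT0 : T0 ≤ t := le_trans (le_max_left _ _) ht
  have hstabs : ε ≤ |s i t| := by simpa [Real.dist_eq] using hst
  have hCδ : C * δ = ε / 2 := by rw [hδ]; field_simp
  have hhalf : ∀ τ ∈ Set.Icc t (t + δ), ε / 2 ≤ |s i τ| := by
    intro τ hτ
    have hτ0 : (0:ℝ) ≤ τ := le_trans ht0 hτ.1
    have hd : |s i τ - s i t| ≤ C * |τ - t| := hlip τ hτ0 t ht0
    have habs : |τ - t| ≤ δ := by
      rw [abs_of_nonneg (by linarith [hτ.1])]; linarith [hτ.2]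
    have hCm : C * |τ - t| ≤ C * δ := mul_le_mul_of_nonneg_left habs hCpos.le
    have htri := abs_sub_abs_le_abs_sub (s i t) (s i τ)
    rw [abs_sub_comm] at htri
    nlinarith [hd, habs, hCm, hCδ, hstabs, htri]
  have hW' : ∀ τ, HasDerivAt (fun x => V x + c₀ * x) ((-∑ j, k j * s j τ ^ 2) + c₀) τ := by
    intro τ
    have h2 : HasDerivAt (fun x : ℝ => c₀ * x) c₀ τ := by
      simpa using (hasDerivAt_id τ).const_mul c₀
    exact (hV' τ).add h2
  have hWanti : AntitoneOn (fun x => V x + c₀ * x) (Set.Icc t (t + δ)) := by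
    apply antitoneOn_of_deriv_nonpos (convex_Icc _ _)
    · exact fun x _ => ((hW' x).differentiableAt.continuousAt.continuousWithinAt)
    · exact fun x _ => ((hW' x).differentiableAt.differentiableWithinAt)
    · intro x hx
      rw [interior_Icc] at hx
      rw [(hW' x).deriv]
      have hx' : x ∈ Set.Icc t (t + δ) := ⟨hx.1.le, hx.2.le⟩
      have h1 : ε / 2 ≤ |s i x| := hhalf x hx'
      have h2 : (ε / 2) ^ 2 ≤ s i x ^ 2 := by
        nlinarith [sq_abs (s i x), h1, hε]
      have h3 : c₀ ≤ k i * s i x ^ 2 := by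
        rw [hc₀]
        exact mul_le_mul_of_nonneg_left h2 (hk i).le
      have h4 : k i * s i x ^ 2 ≤ ∑ j, k j * s j x ^ 2 :=
        Finset.single_le_sum (f := fun j => k j * s j x ^ 2)
          (fun j _ => mul_nonneg (hk j).le (sq_nonneg _)) (Finset.mem_univ i)
      linarith
  have hkey : V (t + δ) + c₀ * (t + δ) ≤ V t + c₀ * t :=
    hWanti (Set.left_mem_Icc.2 (by linarith)) (Set.right_mem_Icc.2 (by linarith)) (by linarith)
  have h1 : V t < L + c₀ * δ := hT0 t htT0
  have h2 : L ≤ V (t + δ) := hLle _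
  nlinarith
end

section
/- For i = 1, ..., N, let m_i be a positive integer, f_i : [0,∞) → ℝ^{m_i} a continuous bounded function, k_i > 0, Λ_i a symmetric positive definite m_i×m_i real matrix, D_i ≥ 0, and d_i : [0,∞) → ℝ a measurable function with |d_i(t)| ≤ D_i for all t ≥ 0. Suppose s_i : [0,∞) → ℝ, θ̃_i : [0,∞) → ℝ^{m_i}, and D̃_i : [0,∞) → ℝ are locally absolutely continuous, and σ_i : [0,∞) → ℝ is a measurable function with σ_i(t) ∈ [−1,1] and σ_i(t)s_i(t) = |s_i(t)| for all t ≥ 0, such that for almost every t ≥ 0: s_i'(t) = f_i(t)ᵀθ̃_i(t) + d_i(t) − σ_i(t)(D̃_i(t) + D_i) − k_i s_i(t), θ̃_i'(t) = −Λ_i^{−1} f_i(t) s_i(t), and D̃_i'(t) = σ_i(t) s_i(t). Then s_i, θ̃_i, D̃_i are bounded on [0,∞), ∫_0^∞ s_i(t)² dt < ∞, and s_i(t) → 0 as t → ∞ for each i. -/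
open Matrix Filter MeasureTheory Set

def IsLocACDeriv {E : Type*} [NormedAddCommGroup E] [NormedSpace ℝ E]
    (g g' : ℝ → E) : Prop :=
  MeasureTheory.LocallyIntegrable g' MeasureTheory.volume ∧
    ∀ t, g t = g 0 + ∫ u in (0 : ℝ)..t, g' u

lemma LocAC.ii {E : Type*} [NormedAddCommGroup E] [NormedSpace ℝ E] {g' : ℝ → E}
    (h : LocallyIntegrable g' volume) (a b : ℝ) : IntervalIntegrable g' volume a b :=
  intervalIntegrable_iff.2 ((h.integrableOn_isCompact isCompact_uIcc).mono_set uIoc_subset_uIcc)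

lemma LocAC.cont {E : Type*} [NormedAddCommGroup E] [NormedSpace ℝ E] {g g' : ℝ → E}
    (h : IsLocACDeriv g g') : Continuous g := by
  have : Continuous fun t => g 0 + ∫ u in (0:ℝ)..t, g' u :=
    continuous_const.add (intervalIntegral.continuous_primitive (fun a b => LocAC.ii h.1 a b) 0)
  exact this.congr fun t => (h.2 t).symm

/-- The key Fubini identity on the triangle. -/
lemma LocAC.trio {t : ℝ} (ht : 0 ≤ t) {g h : ℝ → ℝ}
    (hg : IntegrableOn g (Ioc 0 t)) (hh : IntegrableOn h (Ioc 0 t)) :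
    (∫ u in Ioc 0 t, g u * ∫ v in Ioc 0 u, h v)
      + (∫ u in Ioc 0 t, h u * ∫ v in Ioc 0 u, g v)
    = (∫ u in Ioc 0 t, g u) * (∫ u in Ioc 0 t, h u) := by
  set A : Set ℝ := Ioc 0 t with hA
  set μ : Measure ℝ := volume.restrict A with hμ
  have hF : Integrable (fun p : ℝ × ℝ => g p.1 * h p.2) (μ.prod μ) := hg.mul_prod hh
  set S : Set (ℝ × ℝ) := {p | p.2 ≤ p.1} with hS
  have hSm : MeasurableSet S := measurableSet_le measurable_snd measurable_fst
  have h1 : ∫ p, S.indicator (fun p : ℝ × ℝ => g p.1 * h p.2) p ∂(μ.prod μ)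
      = ∫ u in A, g u * ∫ v in Ioc 0 u, h v := by
    rw [MeasureTheory.integral_prod _ (hF.indicator hSm)]
    refine setIntegral_congr_fun measurableSet_Ioc fun u hu => ?_
    have : ∀ v, S.indicator (fun p : ℝ × ℝ => g p.1 * h p.2) (u, v)
        = g u * (Iic u).indicator h v := by
      intro v
      by_cases hv : v ≤ u
      · rw [indicator_of_mem (by exact hv) , indicator_of_mem (by exact hv)]
      · rw [indicator_of_notMem (by exact hv), indicator_of_notMem (by exact hv), mul_zero]
    simp only [this]
    rw [MeasureTheory.integral_const_mul, setIntegral_indicator measurableSet_Iic, hA,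
      Set.Ioc_inter_Iic, min_eq_right hu.2]
  have h2 : ∫ p, Sᶜ.indicator (fun p : ℝ × ℝ => g p.1 * h p.2) p ∂(μ.prod μ)
      = ∫ u in A, h u * ∫ v in Ioc 0 u, g v := by
    rw [MeasureTheory.integral_prod_symm _ (hF.indicator hSm.compl)]
    refine setIntegral_congr_fun measurableSet_Ioc fun v hv => ?_
    have : ∀ u, Sᶜ.indicator (fun p : ℝ × ℝ => g p.1 * h p.2) (u, v)
        = h v * (Iio v).indicator g u := by
      intro u
      by_cases huv : u < v
      · rw [indicator_of_mem (by simpa [hS] using huv), indicator_of_mem (by exact huv)]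
        ring
      · rw [indicator_of_notMem (by simpa [hS] using huv),
          indicator_of_notMem (by exact huv), mul_zero]
    simp only [this]
    rw [MeasureTheory.integral_const_mul, setIntegral_indicator measurableSet_Iio]
    have : A ∩ Iio v = Ioo 0 v := by
      ext x
      simp only [hA, mem_inter_iff, mem_Ioc, mem_Iio, mem_Ioo]
      constructor
      · rintro ⟨⟨h1, _⟩, h2⟩; exact ⟨h1, h2⟩
      · rintro ⟨h1, h2⟩; exact ⟨⟨h1, le_trans h2.le hv.2⟩, h2⟩
    rw [this, ← integral_Ioc_eq_integral_Ioo]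
  have hsplit : (∫ p, (fun p : ℝ × ℝ => g p.1 * h p.2) p ∂(μ.prod μ))
      = (∫ p, S.indicator (fun p : ℝ × ℝ => g p.1 * h p.2) p ∂(μ.prod μ))
        + ∫ p, Sᶜ.indicator (fun p : ℝ × ℝ => g p.1 * h p.2) p ∂(μ.prod μ) := by
    rw [integral_indicator hSm, integral_indicator hSm.compl,
      integral_add_compl hSm hF]
  have hprod : (∫ p, (fun p : ℝ × ℝ => g p.1 * h p.2) p ∂(μ.prod μ))
      = (∫ u in A, g u) * (∫ u in A, h u) := by
    rw [MeasureTheory.integral_prod _ hF]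
    simp only [MeasureTheory.integral_const_mul, MeasureTheory.integral_mul_const]
    rfl
  rw [h1, h2] at hsplit
  rw [← hprod, hsplit]

lemma LocAC.primCO {b' : ℝ → ℝ} (hb' : LocallyIntegrable b' volume) {t : ℝ} :
    ContinuousOn (fun u => ∫ v in Ioc 0 u, b' v) (Icc 0 t) := by
  have hc : Continuous fun u => ∫ v in (0:ℝ)..u, b' v :=
    intervalIntegral.continuous_primitive (fun a b => LocAC.ii hb' a b) 0
  refine hc.continuousOn.congr fun u hu => ?_
  beta_reduce
  rw [intervalIntegral.integral_of_le hu.1]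

lemma LocAC.integrableOn_mul_cont {t : ℝ} {a' b : ℝ → ℝ} (ha' : LocallyIntegrable a' volume)
    (hb : ContinuousOn b (Icc 0 t)) :
    IntegrableOn (fun u => a' u * b u) (Ioc 0 t) :=
  ((ha'.integrableOn_isCompact isCompact_Icc).mul_continuousOn hb isCompact_Icc).mono_set
    Ioc_subset_Icc_self

lemma LocAC.prodRep {a b a' b' : ℝ → ℝ} (ha : IsLocACDeriv a a') (hb : IsLocACDeriv b b')
    {t : ℝ} (ht : 0 ≤ t) :
    a t * b t = a 0 * b 0 + ∫ u in Ioc 0 t, (a' u * b u + a u * b' u) := by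
  have hbc : Continuous b := LocAC.cont hb
  have hac : Continuous a := LocAC.cont ha
  set Ga : ℝ → ℝ := fun u => ∫ v in Ioc 0 u, a' v with hGa
  set Gb : ℝ → ℝ := fun u => ∫ v in Ioc 0 u, b' v with hGb
  have hrepa : ∀ u : ℝ, 0 ≤ u → a u = a 0 + Ga u := fun u hu => by
    rw [ha.2 u, intervalIntegral.integral_of_le hu]
  have hrepb : ∀ u : ℝ, 0 ≤ u → b u = b 0 + Gb u := fun u hu => by
    rw [hb.2 u, intervalIntegral.integral_of_le hu]
  have hia : IntegrableOn a' (Ioc 0 t) :=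
    (ha.1.integrableOn_isCompact isCompact_Icc).mono_set Ioc_subset_Icc_self
  have hib : IntegrableOn b' (Ioc 0 t) :=
    (hb.1.integrableOn_isCompact isCompact_Icc).mono_set Ioc_subset_Icc_self
  have hiab : IntegrableOn (fun u => a' u * b u) (Ioc 0 t) :=
    LocAC.integrableOn_mul_cont ha.1 hbc.continuousOn
  have hiba : IntegrableOn (fun u => b' u * a u) (Ioc 0 t) :=
    LocAC.integrableOn_mul_cont hb.1 hac.continuousOn
  have hiaGb : IntegrableOn (fun u => a' u * Gb u) (Ioc 0 t) :=
    LocAC.integrableOn_mul_cont ha.1 (LocAC.primCO hb.1)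
  have hibGa : IntegrableOn (fun u => b' u * Ga u) (Ioc 0 t) :=
    LocAC.integrableOn_mul_cont hb.1 (LocAC.primCO ha.1)
  have e1 : ∫ u in Ioc 0 t, a' u * b u = b 0 * Ga t + ∫ u in Ioc 0 t, a' u * Gb u := by
    have : ∫ u in Ioc 0 t, a' u * b u
        = ∫ u in Ioc 0 t, (b 0 * a' u + a' u * Gb u) := by
      refine setIntegral_congr_fun measurableSet_Ioc fun u hu => ?_
      rw [hrepb u hu.1.le]; ring
    rw [this, MeasureTheory.integral_add (hia.const_mul _) hiaGb,
      MeasureTheory.integral_const_mul]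
  have e2 : ∫ u in Ioc 0 t, a u * b' u = a 0 * Gb t + ∫ u in Ioc 0 t, b' u * Ga u := by
    have : ∫ u in Ioc 0 t, a u * b' u
        = ∫ u in Ioc 0 t, (a 0 * b' u + b' u * Ga u) := by
      refine setIntegral_congr_fun measurableSet_Ioc fun u hu => ?_
      rw [hrepa u hu.1.le]; ring
    rw [this, MeasureTheory.integral_add (hib.const_mul _) hibGa,
      MeasureTheory.integral_const_mul]
  have etrio : (∫ u in Ioc 0 t, a' u * Gb u) + (∫ u in Ioc 0 t, b' u * Ga u)
      = Ga t * Gb t := LocAC.trio ht hia hib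
  have hsum : ∫ u in Ioc 0 t, (a' u * b u + a u * b' u)
      = (∫ u in Ioc 0 t, a' u * b u) + ∫ u in Ioc 0 t, a u * b' u := by
    have : IntegrableOn (fun u => a u * b' u) (Ioc 0 t) := by
      have := hiba; simpa [mul_comm] using this
    exact MeasureTheory.integral_add hiab this
  rw [hsum, e1, e2, hrepa t ht, hrepb t ht]
  have : (∫ u in Ioc 0 t, a' u * Gb u) + (∫ u in Ioc 0 t, b' u * Ga u) = Ga t * Gb t := etrio
  nlinarith [this]

lemma LocAC.comp_clm {E F : Type*} [NormedAddCommGroup E] [NormedSpace ℝ E] [CompleteSpace E]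
    [NormedAddCommGroup F] [NormedSpace ℝ F] [CompleteSpace F] {g g' : ℝ → E}
    (h : IsLocACDeriv g g') (L : E →L[ℝ] F) :
    IsLocACDeriv (fun t => L (g t)) (fun t => L (g' t)) := by
  constructor
  · intro x
    obtain ⟨U, hU, hint⟩ := h.1 x
    exact ⟨U, hU, L.integrable_comp hint⟩
  · intro t
    show L (g t) = L (g 0) + ∫ u in (0:ℝ)..t, L (g' u)
    rw [h.2 t, map_add, L.intervalIntegral_comp_comm (LocAC.ii h.1 0 t)]

lemma posdef_lb {n : ℕ} (hn : 0 < n) (Λ : Matrix (Fin n) (Fin n) ℝ) (hPD : Λ.PosDef) :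
    ∃ c > 0, ∀ x : Fin n → ℝ, c * ‖x‖ ^ 2 ≤ x ⬝ᵥ (Λ *ᵥ x) := by
  have hQc : Continuous fun x : Fin n → ℝ => x ⬝ᵥ (Λ *ᵥ x) := by
    simp only [dotProduct, Matrix.mulVec]
    exact continuous_finset_sum _ fun j _ => (continuous_apply j).mul
      (continuous_finset_sum _ fun l _ => continuous_const.mul (continuous_apply l))
  have : Nonempty (Fin n) := ⟨⟨0, hn⟩⟩
  have hne : (Metric.sphere (0 : Fin n → ℝ) 1).Nonempty :=
    NormedSpace.sphere_nonempty.2 zero_le_one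
  obtain ⟨x0, hx0, hmin⟩ := (isCompact_sphere (0 : Fin n → ℝ) 1).exists_isMinOn hne
    hQc.continuousOn
  have hx0n : ‖x0‖ = 1 := mem_sphere_zero_iff_norm.1 hx0
  have hx0ne : x0 ≠ 0 := fun h => by simp [h] at hx0n
  refine ⟨x0 ⬝ᵥ (Λ *ᵥ x0), by simpa using hPD.dotProduct_mulVec_pos hx0ne, fun x => ?_⟩
  rcases eq_or_ne x 0 with rfl | hx
  · simp
  · have hr : (0:ℝ) < ‖x‖ := norm_pos_iff.2 hx
    obtain ⟨y, hyn, hxy⟩ : ∃ y : Fin n → ℝ, ‖y‖ = 1 ∧ x = ‖x‖ • y := by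
      refine ⟨‖x‖⁻¹ • x, ?_, ?_⟩
      · rw [norm_smul, norm_inv, norm_norm, inv_mul_cancel₀ hr.ne']
      · rw [smul_smul, mul_inv_cancel₀ hr.ne', one_smul]
    have hQy : x0 ⬝ᵥ (Λ *ᵥ x0) ≤ y ⬝ᵥ (Λ *ᵥ y) :=
      isMinOn_iff.1 hmin y (mem_sphere_zero_iff_norm.2 hyn)
    have hhom : x ⬝ᵥ (Λ *ᵥ x) = ‖x‖ ^ 2 * (y ⬝ᵥ (Λ *ᵥ y)) := by
      conv_lhs => rw [hxy]
      simp only [Matrix.mulVec_smul, smul_dotProduct, dotProduct_smul, smul_eq_mul]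
      ring
    rw [hhom]
    nlinarith [sq_nonneg ‖x‖, hQy]
section Main

variable {n : ℕ}

set_option maxHeartbeats 2000000 in
lemma main_lem (hn : 0 < n) {f : ℝ → Fin n → ℝ} (hf : Continuous f)
    {Mf : ℝ} (hMf : ∀ t ≥ (0:ℝ), ‖f t‖ ≤ Mf) {k : ℝ} (hk : 0 < k)
    {Λ : Matrix (Fin n) (Fin n) ℝ} (hPD : Λ.PosDef) (hSym : Λ.IsSymm)
    {D : ℝ} (hD : 0 ≤ D) {d : ℝ → ℝ} (hd : ∀ t ≥ (0:ℝ), |d t| ≤ D)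
    {s : ℝ → ℝ} {θ : ℝ → Fin n → ℝ} {Dt : ℝ → ℝ} {σ : ℝ → ℝ}
    (hσ : ∀ t ≥ (0:ℝ), σ t ∈ Set.Icc (-1 : ℝ) 1 ∧ σ t * s t = |s t|)
    {s' : ℝ → ℝ} {θ' : ℝ → Fin n → ℝ} {Dt' : ℝ → ℝ}
    (hsAC : IsLocACDeriv s s') (hθAC : IsLocACDeriv θ θ') (hDtAC : IsLocACDeriv Dt Dt')
    (heq : ∀ᵐ t ∂(volume.restrict (Set.Ici (0:ℝ))),
      s' t = f t ⬝ᵥ θ t + d t - σ t * (Dt t + D) - k * s t ∧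
      θ' t = (-(s t)) • (Λ⁻¹ *ᵥ f t) ∧ Dt' t = σ t * s t) :
    (∃ M, ∀ t ≥ (0:ℝ), |s t| ≤ M ∧ ‖θ t‖ ≤ M ∧ |Dt t| ≤ M) ∧
    IntegrableOn (fun t => s t ^ 2) (Set.Ici 0) ∧ Tendsto s atTop (nhds 0) := by
  classical
  -- continuity of signals
  have hsc : Continuous s := LocAC.cont hsAC
  have hθc : Continuous θ := LocAC.cont hθAC
  have hDtc : Continuous Dt := LocAC.cont hDtAC
  have hθcj : ∀ j, Continuous fun t => θ t j := fun j => (continuous_apply j).comp hθc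
  have hθACj : ∀ j, IsLocACDeriv (fun t => θ t j) (fun t => θ' t j) := fun j =>
    LocAC.comp_clm hθAC (ContinuousLinearMap.proj j)
  -- positive definiteness lower bound
  obtain ⟨c, hc, hQlb⟩ := posdef_lb hn Λ hPD
  -- Lyapunov function
  set V : ℝ → ℝ := fun t => s t * s t + θ t ⬝ᵥ (Λ *ᵥ θ t) + Dt t * Dt t with hV
  set W : ℝ → ℝ := fun u => (s' u * s u + s u * s' u)
    + (∑ j, ∑ l, Λ j l * (θ' u j * θ u l + θ u j * θ' u l))
    + (Dt' u * Dt u + Dt u * Dt' u) with hWdef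
  have hQV : ∀ x : Fin n → ℝ, x ⬝ᵥ (Λ *ᵥ x) = ∑ j, ∑ l, Λ j l * (x j * x l) := by
    intro x
    simp only [dotProduct, Matrix.mulVec, Finset.mul_sum]
    exact Finset.sum_congr rfl fun j _ => Finset.sum_congr rfl fun l _ => by ring
  -- integrability of the pieces of W
  have hIθ : ∀ (t : ℝ) (j l : Fin n),
      IntegrableOn (fun u => Λ j l * (θ' u j * θ u l + θ u j * θ' u l)) (Set.Ioc 0 t) := by
    intro t j l
    have h1 : IntegrableOn (fun u => θ' u j * θ u l) (Set.Ioc 0 t) :=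
      LocAC.integrableOn_mul_cont (hθACj j).1 (hθcj l).continuousOn
    have h2 : IntegrableOn (fun u => θ' u l * θ u j) (Set.Ioc 0 t) :=
      LocAC.integrableOn_mul_cont (hθACj l).1 (hθcj j).continuousOn
    have h2' : IntegrableOn (fun u => θ u j * θ' u l) (Set.Ioc 0 t) := by
      simpa [mul_comm] using h2
    exact (h1.add h2').const_mul _
  have hIs : ∀ t : ℝ, IntegrableOn (fun u => s' u * s u + s u * s' u) (Set.Ioc 0 t) := by
    intro t
    have h1 : IntegrableOn (fun u => s' u * s u) (Set.Ioc 0 t) :=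
      LocAC.integrableOn_mul_cont hsAC.1 hsc.continuousOn
    have h2 : IntegrableOn (fun u => s u * s' u) (Set.Ioc 0 t) := by
      simpa [mul_comm] using h1
    exact h1.add h2
  have hIDt : ∀ t : ℝ, IntegrableOn (fun u => Dt' u * Dt u + Dt u * Dt' u) (Set.Ioc 0 t) := by
    intro t
    have h1 : IntegrableOn (fun u => Dt' u * Dt u) (Set.Ioc 0 t) :=
      LocAC.integrableOn_mul_cont hDtAC.1 hDtc.continuousOn
    have h2 : IntegrableOn (fun u => Dt u * Dt' u) (Set.Ioc 0 t) := by
      simpa [mul_comm] using h1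
    exact h1.add h2
  have hIsum : ∀ t : ℝ, IntegrableOn
      (fun u => ∑ j, ∑ l, Λ j l * (θ' u j * θ u l + θ u j * θ' u l)) (Set.Ioc 0 t) := by
    intro t
    exact integrable_finset_sum _ fun j _ => integrable_finset_sum _ fun l _ => hIθ t j l
  have hWint : ∀ t : ℝ, IntegrableOn W (Set.Ioc 0 t) := fun t =>
    ((hIs t).add (hIsum t)).add (hIDt t)
  -- representation of V
  have hVrep : ∀ t : ℝ, 0 ≤ t → V t = V 0 + ∫ u in Set.Ioc 0 t, W u := by
    intro t ht
    have h1 := LocAC.prodRep hsAC hsAC ht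
    have h3 := LocAC.prodRep hDtAC hDtAC ht
    have hterm : ∀ j l : Fin n, Λ j l * (θ t j * θ t l) = Λ j l * (θ 0 j * θ 0 l)
        + ∫ u in Set.Ioc 0 t, Λ j l * (θ' u j * θ u l + θ u j * θ' u l) := by
      intro j l
      rw [MeasureTheory.integral_const_mul, LocAC.prodRep (hθACj j) (hθACj l) ht]
      ring
    have hswap : (∑ j : Fin n, ∑ l : Fin n, ∫ u in Set.Ioc 0 t,
          Λ j l * (θ' u j * θ u l + θ u j * θ' u l))
        = ∫ u in Set.Ioc 0 t, ∑ j : Fin n, ∑ l : Fin n,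
            Λ j l * (θ' u j * θ u l + θ u j * θ' u l) := by
      rw [MeasureTheory.integral_finset_sum _ (fun j _ =>
        integrable_finset_sum _ fun l _ => hIθ t j l)]
      exact Finset.sum_congr rfl fun j _ =>
        (MeasureTheory.integral_finset_sum _ fun l _ => hIθ t j l).symm
    have h2 : θ t ⬝ᵥ (Λ *ᵥ θ t) = θ 0 ⬝ᵥ (Λ *ᵥ θ 0)
        + ∫ u in Set.Ioc 0 t, ∑ j : Fin n, ∑ l : Fin n,
            Λ j l * (θ' u j * θ u l + θ u j * θ' u l) := by
      calc θ t ⬝ᵥ (Λ *ᵥ θ t) = ∑ j : Fin n, ∑ l : Fin n, Λ j l * (θ t j * θ t l) := hQV _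
        _ = ∑ j : Fin n, ∑ l : Fin n, (Λ j l * (θ 0 j * θ 0 l)
            + ∫ u in Set.Ioc 0 t, Λ j l * (θ' u j * θ u l + θ u j * θ' u l)) :=
          Finset.sum_congr rfl fun j _ => Finset.sum_congr rfl fun l _ => hterm j l
        _ = ∑ j : Fin n, ((∑ l : Fin n, Λ j l * (θ 0 j * θ 0 l))
            + ∑ l : Fin n, ∫ u in Set.Ioc 0 t, Λ j l * (θ' u j * θ u l + θ u j * θ' u l)) :=
          Finset.sum_congr rfl fun j _ => Finset.sum_add_distrib
        _ = (∑ j : Fin n, ∑ l : Fin n, Λ j l * (θ 0 j * θ 0 l))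
            + ∑ j : Fin n, ∑ l : Fin n, ∫ u in Set.Ioc 0 t,
                Λ j l * (θ' u j * θ u l + θ u j * θ' u l) := Finset.sum_add_distrib
        _ = θ 0 ⬝ᵥ (Λ *ᵥ θ 0) + ∫ u in Set.Ioc 0 t, ∑ j : Fin n, ∑ l : Fin n,
              Λ j l * (θ' u j * θ u l + θ u j * θ' u l) := by rw [← hQV, hswap]
    have hWsplit : ∫ u in Set.Ioc 0 t, W u
        = (∫ u in Set.Ioc 0 t, (s' u * s u + s u * s' u))
          + (∫ u in Set.Ioc 0 t, ∑ j : Fin n, ∑ l : Fin n,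
              Λ j l * (θ' u j * θ u l + θ u j * θ' u l))
          + ∫ u in Set.Ioc 0 t, (Dt' u * Dt u + Dt u * Dt' u) := by
      have h12 : IntegrableOn (fun u => (s' u * s u + s u * s' u)
          + ∑ j : Fin n, ∑ l : Fin n, Λ j l * (θ' u j * θ u l + θ u j * θ' u l))
          (Set.Ioc 0 t) := (hIs t).add (hIsum t)
      simp only [hWdef]
      rw [MeasureTheory.integral_add h12 (hIDt t),
        MeasureTheory.integral_add (hIs t) (hIsum t)]
    simp only [hV]
    rw [hWsplit]
    linarith [h1, h2, h3]
  -- a.e. bound on W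
  have hdet : IsUnit Λ.det := isUnit_iff_ne_zero.2 hPD.det_pos.ne'
  have hΛw : ∀ v : Fin n → ℝ, Λ *ᵥ (Λ⁻¹ *ᵥ v) = v := by
    intro v
    rw [Matrix.mulVec_mulVec, Matrix.mul_nonsing_inv _ hdet, Matrix.one_mulVec]
  have hsum_eq : ∀ x y : Fin n → ℝ,
      (∑ j : Fin n, ∑ l : Fin n, Λ j l * (y j * x l + x j * y l))
        = y ⬝ᵥ (Λ *ᵥ x) + x ⬝ᵥ (Λ *ᵥ y) := by
    intro x y
    simp only [dotProduct, Matrix.mulVec, Finset.mul_sum]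
    rw [← Finset.sum_add_distrib]
    refine Finset.sum_congr rfl fun j _ => ?_
    rw [← Finset.sum_add_distrib]
    exact Finset.sum_congr rfl fun l _ => by ring
  have hWle : ∀ᵐ u ∂(volume.restrict (Set.Ici (0:ℝ))),
      W u ≤ -(2*k) * (s u * s u) := by
    filter_upwards [heq, ae_restrict_mem measurableSet_Ici] with u hu hu0
    obtain ⟨h1, h2, h3⟩ := hu
    have hσs : σ u * s u = |s u| := (hσ u hu0).2
    have e0 : (Λ⁻¹ *ᵥ f u) ⬝ᵥ (Λ *ᵥ θ u) = f u ⬝ᵥ θ u := by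
      rw [Matrix.dotProduct_mulVec, ← Matrix.mulVec_transpose, hSym.eq, hΛw]
    have e1 : (∑ j : Fin n, ∑ l : Fin n, Λ j l * (θ' u j * θ u l + θ u j * θ' u l))
        = -(2 * (s u * (f u ⬝ᵥ θ u))) := by
      rw [hsum_eq (θ u) (θ' u), h2, smul_dotProduct, Matrix.mulVec_smul,
        dotProduct_smul, e0, hΛw, smul_eq_mul, smul_eq_mul,
        dotProduct_comm (θ u) (f u)]
      ring
    have hsd : s u * d u ≤ |s u| * D :=
      calc s u * d u ≤ |s u * d u| := le_abs_self _
        _ = |s u| * |d u| := abs_mul _ _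
        _ ≤ |s u| * D := mul_le_mul_of_nonneg_left (hd u hu0) (abs_nonneg _)
    have key : W u = 2 * (s u * d u) - 2 * (|s u| * D) - 2 * (k * (s u * s u)) := by
      simp only [hWdef]
      rw [e1, h1, h3]
      nlinarith [hσs]
    rw [key]
    nlinarith [hsd]
  -- main energy inequality
  have hVle : ∀ t : ℝ, 0 ≤ t → V t + (2*k) * ∫ u in Set.Ioc 0 t, s u * s u ≤ V 0 := by
    intro t ht
    have hint_s2 : IntegrableOn (fun u => s u * s u) (Set.Ioc 0 t) :=
      (hsc.mul hsc).integrableOn_Ioc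
    have hsubset : Set.Ioc (0:ℝ) t ⊆ Set.Ici 0 := fun x hx => hx.1.le
    have hmono : ∫ u in Set.Ioc 0 t, W u ≤ ∫ u in Set.Ioc 0 t, -(2*k) * (s u * s u) :=
      integral_mono_ae (hWint t) (hint_s2.const_mul _)
        (ae_restrict_of_ae_restrict_of_subset hsubset hWle)
    rw [MeasureTheory.integral_const_mul] at hmono
    have := hVrep t ht
    linarith
  -- lower bound for V
  have hVlb : ∀ t : ℝ, s t * s t + c * ‖θ t‖^2 + Dt t * Dt t ≤ V t := by
    intro t
    have := hQlb (θ t)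
    simp only [hV]
    linarith
  have hV0 : ∀ t : ℝ, 0 ≤ t → V t ≤ V 0 := by
    intro t ht
    have h2 : 0 ≤ ∫ u in Set.Ioc 0 t, s u * s u :=
      setIntegral_nonneg measurableSet_Ioc fun x _ => mul_self_nonneg _
    nlinarith [hVle t ht]
  -- explicit bounds
  set M : ℝ := Real.sqrt (V 0) + Real.sqrt (V 0 / c) with hM
  have hbound : ∀ t ≥ (0:ℝ), |s t| ≤ M ∧ ‖θ t‖ ≤ M ∧ |Dt t| ≤ M := by
    intro t ht
    have hVt := hV0 t ht
    have hlb := hVlb t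
    have hsq : s t * s t ≤ V 0 := by
      nlinarith [mul_self_nonneg (Dt t), mul_nonneg hc.le (sq_nonneg ‖θ t‖)]
    have hDsq : Dt t * Dt t ≤ V 0 := by
      nlinarith [mul_self_nonneg (s t), mul_nonneg hc.le (sq_nonneg ‖θ t‖)]
    have hθsq : c * ‖θ t‖^2 ≤ V 0 := by
      nlinarith [mul_self_nonneg (s t), mul_self_nonneg (Dt t)]
    have h1 : |s t| ≤ Real.sqrt (V 0) := by
      rw [← Real.sqrt_mul_self_eq_abs]
      exact Real.sqrt_le_sqrt hsq
    have h2 : |Dt t| ≤ Real.sqrt (V 0) := by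
      rw [← Real.sqrt_mul_self_eq_abs]
      exact Real.sqrt_le_sqrt hDsq
    have h3 : ‖θ t‖ ≤ Real.sqrt (V 0 / c) := by
      have hh : ‖θ t‖^2 ≤ V 0 / c := by
        rw [le_div_iff₀ hc]; nlinarith
      calc ‖θ t‖ = Real.sqrt (‖θ t‖^2) := (Real.sqrt_sq (norm_nonneg _)).symm
        _ ≤ Real.sqrt (V 0 / c) := Real.sqrt_le_sqrt hh
    have hnn1 : 0 ≤ Real.sqrt (V 0) := Real.sqrt_nonneg _
    have hnn2 : 0 ≤ Real.sqrt (V 0 / c) := Real.sqrt_nonneg _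
    refine ⟨by rw [hM]; linarith, by rw [hM]; linarith, by rw [hM]; linarith⟩
  have hMnn : 0 ≤ M := le_trans (abs_nonneg _) (hbound 0 le_rfl).1
  -- integral bound
  have hIb : ∀ t : ℝ, 0 ≤ t → ∫ u in Set.Ioc 0 t, s u * s u ≤ V 0 / (2*k) := by
    intro t ht
    have h1 := hVle t ht
    have h2 : 0 ≤ V t := by
      have h3 := hVlb t
      nlinarith [mul_self_nonneg (s t), mul_self_nonneg (Dt t),
        mul_nonneg hc.le (sq_nonneg ‖θ t‖)]
    rw [le_div_iff₀ (by linarith : (0:ℝ) < 2*k)]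
    nlinarith
  -- integrability on Ici 0
  have hint : IntegrableOn (fun t => s t ^ 2) (Set.Ici (0:ℝ)) := by
    rw [integrableOn_Ici_iff_integrableOn_Ioi]
    refine integrableOn_Ioi_of_intervalIntegral_norm_bounded (V 0 / (2*k)) 0
      (fun r : ℝ => (hsc.pow 2).integrableOn_Ioc) (tendsto_id (α := ℝ)) ?_
    filter_upwards [eventually_ge_atTop (0:ℝ)] with r hr
    show (∫ x in (0:ℝ)..r, ‖s x ^ 2‖) ≤ V 0 / (2*k)
    rw [intervalIntegral.integral_of_le hr]
    have heqn : ∀ x : ℝ, ‖s x ^ 2‖ = s x * s x := fun x => by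
      rw [Real.norm_eq_abs, abs_of_nonneg (sq_nonneg _), sq]
    simp only [heqn]
    exact hIb r hr
  -- Lipschitz bound and Barbalat
  have htend : Tendsto s atTop (nhds 0) := by
    set Mf0 : ℝ := max Mf 0 with hMf0
    have hMf0nn : 0 ≤ Mf0 := le_max_right _ _
    set L : ℝ := n * Mf0 * M + D + (M + D) + k * M + 1 with hL
    have hnMnn : 0 ≤ (n:ℝ) * Mf0 * M := by positivity
    have hLpos : 0 < L := by
      have hkM : 0 ≤ k * M := mul_nonneg hk.le hMnn
      rw [hL]; nlinarith
    have hs'b : ∀ᵐ u ∂(volume.restrict (Set.Ici (0:ℝ))), |s' u| ≤ L := by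
      filter_upwards [heq, ae_restrict_mem measurableSet_Ici] with u hu hu0
      obtain ⟨h1, -, -⟩ := hu
      have hfθ : |f u ⬝ᵥ θ u| ≤ n * Mf0 * M := by
        have habs : |f u ⬝ᵥ θ u| ≤ ∑ j : Fin n, |f u j * θ u j| :=
          Finset.abs_sum_le_sum_abs _ _
        have hterm : ∀ j : Fin n, |f u j * θ u j| ≤ Mf0 * M := by
          intro j
          rw [abs_mul]
          have hfj : |f u j| ≤ Mf0 := by
            have h5 : ‖f u j‖ ≤ ‖f u‖ := norm_le_pi_norm (f u) j
            rw [Real.norm_eq_abs] at h5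
            exact le_trans (le_trans h5 (hMf u hu0)) (le_max_left _ _)
          have hθj : |θ u j| ≤ M := by
            have h5 : ‖θ u j‖ ≤ ‖θ u‖ := norm_le_pi_norm (θ u) j
            rw [Real.norm_eq_abs] at h5
            exact le_trans h5 (hbound u hu0).2.1
          exact mul_le_mul hfj hθj (abs_nonneg _) hMf0nn
        calc |f u ⬝ᵥ θ u| ≤ ∑ j : Fin n, |f u j * θ u j| := habs
          _ ≤ ∑ _j : Fin n, Mf0 * M := Finset.sum_le_sum fun j _ => hterm j
          _ = n * (Mf0 * M) := by
            rw [Finset.sum_const, Finset.card_univ, Fintype.card_fin, nsmul_eq_mul]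
          _ = n * Mf0 * M := by ring
      have hσb : |σ u| ≤ 1 := abs_le.2 ⟨(hσ u hu0).1.1, (hσ u hu0).1.2⟩
      have hDtb := (hbound u hu0).2.2
      have hsb := (hbound u hu0).1
      have habs1 : |σ u * (Dt u + D)| ≤ M + D := by
        rw [abs_mul]
        have hMD : 0 ≤ M + D := by linarith
        have h6 : |Dt u + D| ≤ M + D := by
          calc |Dt u + D| ≤ |Dt u| + |D| := abs_add_le _ _
            _ ≤ M + D := by rw [abs_of_nonneg hD]; linarith
        calc |σ u| * |Dt u + D| ≤ 1 * (M + D) :=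
            mul_le_mul hσb h6 (abs_nonneg _) zero_le_one
          _ = M + D := one_mul _
      have habs2 : |k * s u| ≤ k * M := by
        rw [abs_mul, abs_of_pos hk]
        exact mul_le_mul_of_nonneg_left hsb hk.le
      have hdb := hd u hu0
      rw [h1, hL]
      have t1 : |f u ⬝ᵥ θ u + d u - σ u * (Dt u + D) - k * s u|
          ≤ |f u ⬝ᵥ θ u + d u - σ u * (Dt u + D)| + |k * s u| := by
        simpa [sub_eq_add_neg] using
          abs_add_le (f u ⬝ᵥ θ u + d u - σ u * (Dt u + D)) (-(k * s u))
      have t2 : |f u ⬝ᵥ θ u + d u - σ u * (Dt u + D)|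
          ≤ |f u ⬝ᵥ θ u + d u| + |σ u * (Dt u + D)| := by
        simpa [sub_eq_add_neg] using abs_add_le (f u ⬝ᵥ θ u + d u) (-(σ u * (Dt u + D)))
      have t3 : |f u ⬝ᵥ θ u + d u| ≤ |f u ⬝ᵥ θ u| + |d u| := abs_add_le _ _
      linarith
    have hlip : ∀ u v : ℝ, 0 ≤ u → u ≤ v → |s v - s u| ≤ L * (v - u) := by
      intro u v hu huv
      have hadj := intervalIntegral.integral_add_adjacent_intervals
        (LocAC.ii hsAC.1 0 u) (LocAC.ii hsAC.1 u v)
      have hrep : s v - s u = ∫ x in u..v, s' x := by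
        rw [hsAC.2 v, hsAC.2 u]
        linarith
      have hae : ∀ᵐ x ∂(volume.restrict (Set.uIoc u v)), ‖s' x‖ ≤ L := by
        have hsub : Set.uIoc u v ⊆ Set.Ici 0 := by
          rw [Set.uIoc_of_le huv]
          exact fun x hx => le_trans hu hx.1.le
        filter_upwards [ae_restrict_of_ae_restrict_of_subset hsub hs'b] with x hx
        rwa [Real.norm_eq_abs]
      have hb := intervalIntegral.norm_integral_le_abs_of_norm_le hae
        (intervalIntegrable_const (c := L))
      rw [intervalIntegral.integral_const, smul_eq_mul] at hb
      rw [hrep]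
      calc |∫ x in u..v, s' x| ≤ |(v - u) * L| := by rw [← Real.norm_eq_abs]; exact hb
        _ = L * (v - u) := by
          rw [abs_mul, abs_of_nonneg (by linarith : (0:ℝ) ≤ v - u),
            abs_of_pos hLpos]; ring
    set F : ℝ → ℝ := fun T => ∫ u in Set.Ioc 0 T, s u * s u with hF
    have hFmono : Monotone F := by
      intro u v huv
      exact setIntegral_mono_set ((hsc.mul hsc).integrableOn_Ioc)
        (Eventually.of_forall fun x => mul_self_nonneg _)
        (HasSubset.Subset.eventuallyLE (Set.Ioc_subset_Ioc_right huv))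
    have hFbdd : BddAbove (Set.range F) := by
      refine ⟨V 0 / (2*k), ?_⟩
      rintro x ⟨r, rfl⟩
      exact le_trans (hFmono (le_max_left r 0)) (hIb _ (le_max_right r 0))
    have hFconv := tendsto_atTop_ciSup hFmono hFbdd
    have hcauchy : ∀ α : ℝ, 0 < α → ∃ T : ℝ, 0 ≤ T ∧
        ∀ p q : ℝ, T ≤ p → p ≤ q → F q - F p < α := by
      intro α hα
      obtain ⟨T, hT⟩ := Metric.tendsto_atTop.1 hFconv (α/2) (by linarith)
      refine ⟨max T 0, le_max_right _ _, fun p q hp hpq => ?_⟩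
      have h1 := hT p (le_trans (le_max_left _ _) hp)
      have h2 := hT q (le_trans (le_trans (le_max_left _ _) hp) hpq)
      rw [Real.dist_eq] at h1 h2
      linarith [(abs_lt.1 h1).1, (abs_lt.1 h1).2, (abs_lt.1 h2).1, (abs_lt.1 h2).2]
    rw [Metric.tendsto_atTop]
    intro ε hε
    set δ : ℝ := ε / (2 * L) with hδ
    have hδpos : 0 < δ := div_pos hε (by linarith)
    have hLδ : L * δ = ε / 2 := by
      rw [hδ]; field_simp
    obtain ⟨T, hT0, hTc⟩ := hcauchy (δ * (ε/2)^2) (by positivity)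
    refine ⟨T + δ, fun t htT => ?_⟩
    rw [Real.dist_eq, sub_zero]
    by_contra hcon
    push_neg at hcon
    have htδ : 0 ≤ t - δ := by linarith
    have hsmall : ∀ x ∈ Set.Ioc (t - δ) t, ε/2 ≤ |s x| := by
      intro x hx
      have hx0 : 0 ≤ x := le_trans htδ hx.1.le
      have hl := hlip x t hx0 hx.2
      have hLd : L * (t - x) ≤ ε/2 := by
        calc L * (t - x) ≤ L * δ :=
            mul_le_mul_of_nonneg_left (by linarith [hx.1]) hLpos.le
          _ = ε/2 := hLδ
      have h7 : |s t| - |s x| ≤ |s t - s x| := abs_sub_abs_le_abs_sub _ _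
      nlinarith [hl, hLd, h7, hcon]
    have hvol : (volume (Set.Ioc (t-δ) t)).toReal = δ := by
      rw [Real.volume_Ioc, show t - (t - δ) = δ by ring]
      exact ENNReal.toReal_ofReal hδpos.le
    have hsplit : F t = F (t - δ) + ∫ u in Set.Ioc (t-δ) t, s u * s u := by
      simp only [hF]
      rw [← MeasureTheory.setIntegral_union (f := fun u => s u * s u)
        (Set.Ioc_disjoint_Ioc_of_le le_rfl) measurableSet_Ioc
        ((hsc.mul hsc).integrableOn_Ioc) ((hsc.mul hsc).integrableOn_Ioc),
        Set.Ioc_union_Ioc_eq_Ioc htδ (by linarith : t - δ ≤ t)]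
    have hlb2 : δ * (ε/2)^2 ≤ ∫ u in Set.Ioc (t-δ) t, s u * s u := by
      have hmono2 : ∫ u in Set.Ioc (t-δ) t, (ε/2)^2 ≤ ∫ u in Set.Ioc (t-δ) t, s u * s u := by
        refine setIntegral_mono_on (integrableOn_const measure_Ioc_lt_top.ne)
          ((hsc.mul hsc).integrableOn_Ioc) measurableSet_Ioc fun x hx => ?_
        have h8 := hsmall x hx
        nlinarith [abs_mul_abs_self (s x), abs_nonneg (s x)]
      rwa [setIntegral_const, measureReal_def, hvol, smul_eq_mul] at hmono2
    have h9 := hTc (t - δ) t (by linarith) (by linarith)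
    linarith
  exact ⟨⟨M, hbound⟩, hint, htend⟩

end Main

/-- The Lyapunov core of the disturbance-rejection result (Theorem 2): along the Filippov
closed-loop dynamics `s_i' = f_iᵀθ̃_i + d_i − σ_i (D̃_i + D_i) − k_i s_i`,
`θ̃_i' = −Λ_i⁻¹ f_i s_i`, `D̃_i' = σ_i s_i` (a.e. on `[0,∞)`), where `σ_i` is a measurable
selection of the set-valued sign of `s_i` and `|d_i| ≤ D_i`, the signals `s_i`, `θ̃_i`,
`D̃_i` are bounded, `∫_0^∞ s_i² < ∞`, and `s_i(t) → 0`. -/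
theorem stmt_12 (N : ℕ) (m : Fin N → ℕ) (hm : ∀ i, 0 < m i)
    (f : (i : Fin N) → ℝ → (Fin (m i) → ℝ)) (hf : ∀ i, Continuous (f i))
    (Mf : ℝ) (hMf : ∀ i, ∀ t ≥ (0 : ℝ), ‖f i t‖ ≤ Mf)
    (k : Fin N → ℝ) (hk : ∀ i, 0 < k i)
    (Λ : (i : Fin N) → Matrix (Fin (m i)) (Fin (m i)) ℝ)
    (hΛ : ∀ i, (Λ i).PosDef ∧ (Λ i).IsSymm)
    (D : Fin N → ℝ) (hD : ∀ i, 0 ≤ D i)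
    (d : Fin N → ℝ → ℝ) (hdm : ∀ i, Measurable (d i))
    (hd : ∀ i, ∀ t ≥ (0 : ℝ), |d i t| ≤ D i)
    (s : Fin N → ℝ → ℝ) (θ : (i : Fin N) → ℝ → Fin (m i) → ℝ) (Dt : Fin N → ℝ → ℝ)
    (σ : Fin N → ℝ → ℝ) (hσm : ∀ i, Measurable (σ i))
    (hσ : ∀ i, ∀ t ≥ (0 : ℝ), σ i t ∈ Set.Icc (-1 : ℝ) 1 ∧ σ i t * s i t = |s i t|)
    (s' : Fin N → ℝ → ℝ) (θ' : (i : Fin N) → ℝ → Fin (m i) → ℝ) (Dt' : Fin N → ℝ → ℝ)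
    (hsAC : ∀ i, IsLocACDeriv (s i) (s' i))
    (hθAC : ∀ i, IsLocACDeriv (θ i) (θ' i))
    (hDtAC : ∀ i, IsLocACDeriv (Dt i) (Dt' i))
    (heq : ∀ i, ∀ᵐ t ∂(MeasureTheory.volume.restrict (Set.Ici (0 : ℝ))),
      s' i t = f i t ⬝ᵥ θ i t + d i t - σ i t * (Dt i t + D i) - k i * s i t ∧
      θ' i t = (-(s i t)) • ((Λ i)⁻¹ *ᵥ f i t) ∧
      Dt' i t = σ i t * s i t) :
    (∀ i, ∃ M, ∀ t ≥ (0 : ℝ), |s i t| ≤ M ∧ ‖θ i t‖ ≤ M ∧ |Dt i t| ≤ M) ∧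
    (∀ i, MeasureTheory.IntegrableOn (fun t => s i t ^ 2) (Set.Ici 0)) ∧
    (∀ i, Tendsto (s i) atTop (nhds 0)) := by
  have H := fun i => main_lem (hm i) (hf i) (hMf i) (hk i) (hΛ i).1 (hΛ i).2
    (hD i) (hd i) (hσ i) (hsAC i) (hθAC i) (hDtAC i) (heq i)
  exact ⟨fun i => (H i).1, fun i => (H i).2.1, fun i => (H i).2.2⟩
end
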